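/- Let $c > -1$ and define $V(z_0, r) = \int_{B(x_0,r) \times [y_0, y_0+r)} y^c \, dx \, dy$ for $z_0 = (x_0,y_0) \in \mathbb{R}^{N+1}_+$ and $r > 0$. Then there exists $C \ge 1$ such that for all $z_0 \in \mathbb{R}^{N+1}_+$ and all $s, r > 0$, $\frac{V(z_0, s)}{V(z_0, r)} \le C \left(\frac{s}{r}\right)^N \left(1 \vee \frac{s}{r}\right)^{1 + c^+}$, where $c^+ = \max(c, 0)$. -/

import Mathlib

open Real MeasureTheory

/-- The weighted measure of the cylindric ball `Q(z0,r) = B(x0,r) × [y0, y0+r)`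
with respect to the measure `y^c dx dy`. -/
noncomputable def cylVol (N : ℕ) (c : ℝ) (z0 : EuclideanSpace ℝ (Fin N) × ℝ) (r : ℝ) : ℝ :=
  ∫ z in (Metric.ball z0.1 r) ×ˢ (Set.Ico z0.2 (z0.2 + r)),
    z.2 ^ c

/-!
The measure of the cylinder factors as `r ^ N · |B(0,1)|` times the one-dimensional weight
`∫_{y0}^{y0+r} y^c dy`. For `s ≤ r` the weight is monotone in the length. For `s = k r` with
`k ≥ 1`, the substitution `y = y0 + k t` turns the weight of length `s` into
`k ∫_0^r (y0 + k t)^c dt`, and `(y0 + k t)^c ≤ k^{c⁺} (y0 + t)^c` because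
`y0 + t ≤ y0 + k t ≤ k (y0 + t)`. So the estimate holds with `C = 1`.
-/

section WeightedLength

variable {a c : ℝ}

lemma rpow_add_mul_le (ha : 0 < a) {k t : ℝ} (hk : 1 ≤ k) (ht : 0 ≤ t) :
    (a + k * t) ^ c ≤ k ^ max c 0 * (a + t) ^ c := by
  rcases le_total c 0 with hc | hc
  · rw [max_eq_right hc, rpow_zero, one_mul]
    exact rpow_le_rpow_of_nonpos (by positivity) (by nlinarith) hc
  · rw [max_eq_left hc, ← mul_rpow (by positivity) (by positivity)]
    exact rpow_le_rpow (by positivity) (by nlinarith) hc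

lemma intervalIntegrable_rpow_of_pos (ha : 0 < a) {r : ℝ} (hr : 0 ≤ r) :
    IntervalIntegrable (fun y : ℝ => y ^ c) volume a (a + r) :=
  intervalIntegral.intervalIntegrable_rpow <| Or.inr fun h0 => by
    rw [Set.uIcc_of_le (by linarith)] at h0
    linarith [h0.1]

lemma intervalIntegrable_rpow_add_mul (ha : 0 < a) {k r : ℝ} (hk : 0 ≤ k) (hr : 0 ≤ r) :
    IntervalIntegrable (fun t : ℝ => (a + k * t) ^ c) volume 0 r := by
  refine ContinuousOn.intervalIntegrable <|
    (continuousOn_const.add (continuousOn_const.mul continuousOn_id)).rpow_const fun t ht => ?_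
  rw [Set.uIcc_of_le hr] at ht
  exact Or.inl (by nlinarith [ht.1] : 0 < a + k * t).ne'

lemma integral_rpow_add_mul_le (ha : 0 < a) {k r : ℝ} (hk : 1 ≤ k) (hr : 0 ≤ r) :
    ∫ y in a..a + k * r, y ^ c ≤ k ^ (1 + max c 0) * ∫ y in a..a + r, y ^ c := by
  have hk0 : 0 < k := by linarith
  calc ∫ y in a..a + k * r, y ^ c
      = k * ∫ t in (0 : ℝ)..r, (a + k * t) ^ c := by
        simpa using (intervalIntegral.smul_integral_comp_add_mul (fun y : ℝ => y ^ c) k a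
          (a := 0) (b := r)).symm
    _ ≤ k * ∫ t in (0 : ℝ)..r, k ^ max c 0 * (a + t) ^ c := by
        gcongr
        refine intervalIntegral.integral_mono_on hr (intervalIntegrable_rpow_add_mul ha hk0.le hr)
          ?_ fun t ht => rpow_add_mul_le ha hk ht.1
        simpa using (intervalIntegrable_rpow_add_mul (c := c) ha zero_le_one hr).const_mul
          (k ^ max c 0)
    _ = k ^ (1 + max c 0) * ∫ y in a..a + r, y ^ c := by
        rw [intervalIntegral.integral_const_mul,
          intervalIntegral.integral_comp_add_left (fun y : ℝ => y ^ c) a, add_zero,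
          rpow_add hk0, rpow_one, mul_assoc]

lemma integral_rpow_le_max_div_mul (ha : 0 < a) {r s : ℝ} (hr : 0 < r) (hs : 0 ≤ s) :
    ∫ y in a..a + s, y ^ c ≤ max 1 (s / r) ^ (1 + max c 0) * ∫ y in a..a + r, y ^ c := by
  rcases le_total s r with hsr | hrs
  · rw [max_eq_left ((div_le_one hr).2 hsr), one_rpow, one_mul]
    refine intervalIntegral.integral_mono_interval le_rfl (by linarith) (by linarith) ?_
      (intervalIntegrable_rpow_of_pos ha hr.le)
    filter_upwards [ae_restrict_mem measurableSet_Ioc] with y hy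
    exact (rpow_pos_of_pos (ha.trans hy.1) c).le
  · have hk : 1 ≤ s / r := (one_le_div hr).2 hrs
    rw [max_eq_right hk]
    simpa [div_mul_cancel₀ s hr.ne'] using integral_rpow_add_mul_le (c := c) ha hk hr.le

lemma integral_rpow_pos (ha : 0 < a) {r : ℝ} (hr : 0 < r) : 0 < ∫ y in a..a + r, y ^ c :=
  intervalIntegral.intervalIntegral_pos_of_pos_on
    (intervalIntegrable_rpow_of_pos ha hr.le) (fun y hy => rpow_pos_of_pos (ha.trans hy.1) c)
    (by linarith)

end WeightedLength

lemma cylVol_eq_mul_integral (N : ℕ) (c : ℝ) (z0 : EuclideanSpace ℝ (Fin N) × ℝ) {r : ℝ}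
    (hr : 0 < r) :
    cylVol N c z0 r =
      r ^ N * volume.real (Metric.ball (0 : EuclideanSpace ℝ (Fin N)) 1) *
        ∫ y in z0.2..z0.2 + r, y ^ c := by
  have h := setIntegral_prod_mul (μ := volume) (ν := volume) (fun _ => (1 : ℝ))
    (fun y : ℝ => y ^ c) (Metric.ball z0.1 r) (Set.Ico z0.2 (z0.2 + r))
  simp only [one_mul] at h
  rw [cylVol, Measure.volume_eq_prod, h, setIntegral_const, smul_eq_mul, mul_one,
    measureReal_def, Measure.addHaar_ball_of_pos _ _ hr, ENNReal.toReal_mul,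
    ENNReal.toReal_ofReal (by positivity), finrank_euclideanSpace_fin,
    intervalIntegral.integral_of_le (by linarith), integral_Ico_eq_integral_Ioc, measureReal_def]

theorem cylVol_doubling_general_general (N : ℕ) (c : ℝ) :
    ∃ C : ℝ, 1 ≤ C ∧
      ∀ (z0 : EuclideanSpace ℝ (Fin N) × ℝ), 0 < z0.2 → ∀ s r : ℝ, 0 < s → 0 < r →
        cylVol N c z0 s / cylVol N c z0 r ≤
          C * (s / r) ^ (N : ℝ) * (max 1 (s / r)) ^ (1 + max c 0) := by
  refine ⟨1, le_rfl, fun z0 hy s r hs hr => ?_⟩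
  rw [cylVol_eq_mul_integral N c z0 hs, cylVol_eq_mul_integral N c z0 hr]
  set ω := volume.real (Metric.ball (0 : EuclideanSpace ℝ (Fin N)) 1)
  have hω : 0 < ω :=
    ENNReal.toReal_pos (Metric.measure_ball_pos volume _ one_pos).ne' measure_ball_lt_top.ne
  have hA := integral_rpow_pos (c := c) hy hr
  rw [rpow_natCast, one_mul, div_pow, div_le_iff₀ (by positivity)]
  calc s ^ N * ω * ∫ y in z0.2..z0.2 + s, y ^ c
      ≤ s ^ N * ω * (max 1 (s / r) ^ (1 + max c 0) * ∫ y in z0.2..z0.2 + r, y ^ c) := by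
        gcongr
        exact integral_rpow_le_max_div_mul hy hr hs.le
    _ = _ := by field_simp

theorem cylVol_doubling_general (N : ℕ) (c : ℝ) (hc : -1 < c) :
    ∃ C : ℝ, 1 ≤ C ∧
      ∀ (z0 : EuclideanSpace ℝ (Fin N) × ℝ), 0 < z0.2 → ∀ s r : ℝ, 0 < s → 0 < r →
        cylVol N c z0 s / cylVol N c z0 r ≤
          C * (s / r) ^ (N : ℝ) * (max 1 (s / r)) ^ (1 + max c 0) :=
  cylVol_doubling_general_general N c
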